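/- Let m, d ≥ 1 be integers with m ≥ 2 and 8·log m ≤ m. Let (X_{ij})_{i∈[m], j∈[d]} and (Y_i)_{i∈[m]} be m·d + m mutually independent real random variables, each standard Gaussian N(0,1). Define the vector θ ∈ ℝ^d by θ_j = (1/√(d·m)) · Σ_{i=1}^m X_{ij}·Y_i for each j ∈ [d] (this is θ = aᵀW for a network with first-layer rows w_i = X_i/√d and second layer a_i = Y_i/√m, the NTK initialization). Then P[ ‖θ‖ > √(8·log m) ] ≤ 2d/m, where ‖·‖ is the Euclidean norm on ℝ^d. -/

import Mathlib

open MeasureTheory ProbabilityTheory Real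
open scoped NNReal

/-!
Each coordinate `S_j = ∑ᵢ X_ij Y_i` is a sum of `m` independent products of two independent
standard Gaussians. Integrating out `Y` first, `E exp(t X Y) = E exp(t² X² / 2) = (1 - t²)^(-1/2)`,
which is at most `exp t²` for `t² ≤ 1/2`. The two-sided Chernoff bound with
`t = √(2 log m / m)` then gives `P(|S_j| ≥ √(8 m log m)) ≤ 2 e^(-4 log m + 2 log m) = 2 / m²`.
Finally `‖θ‖ > √(8 log m)` forces `|S_j| ≥ √(8 m log m)` for some `j`, and a union bound over
the `d` coordinates gives `2d / m² ≤ 2d / m`.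
-/

lemma integral_exp_mul_sq_gaussianReal {v : ℝ≥0} (hv : v ≠ 0) {c : ℝ} (hc : c * v < 1) :
    ∫ x, exp (c * x ^ 2 / 2) ∂gaussianReal 0 v = (√(1 - c * v))⁻¹ := by
  have hcv : 0 < 1 - c * v := by linarith
  have hdensity : ∀ x : ℝ, gaussianPDFReal 0 v x • exp (c * x ^ 2 / 2)
      = (√(2 * π * v))⁻¹ * exp (-((1 - c * v) / (2 * v)) * x ^ 2) := fun x ↦ by
    rw [gaussianPDFReal_def, smul_eq_mul, mul_assoc, ← exp_add]
    congr 2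
    field_simp
    ring
  rw [integral_gaussianReal_eq_integral_smul hv]
  simp_rw [hdensity]
  rw [integral_const_mul, integral_gaussian, div_div_eq_mul_div, sqrt_div' _ hcv.le,
    show π * (2 * v) = 2 * π * v by ring]
  field_simp

lemma integrable_exp_mul_sq_gaussianReal {v : ℝ≥0} (hv : v ≠ 0) {c : ℝ} (hc : c * v < 1) :
    Integrable (fun x ↦ exp (c * x ^ 2 / 2)) (gaussianReal 0 v) := by
  refine .of_integral_ne_zero ?_
  rw [integral_exp_mul_sq_gaussianReal hv hc]
  exact (inv_pos.2 (sqrt_pos.2 (by linarith))).ne'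

lemma inv_sqrt_one_sub_le_exp {x : ℝ} (hx₀ : 0 ≤ x) (hx : x ≤ 1 / 2) :
    (√(1 - x))⁻¹ ≤ exp x := by
  have hexp : exp (-x) ^ 2 ≤ 1 - x := by
    have hpos : 0 < 1 + 2 * x := by linarith
    calc exp (-x) ^ 2 = (exp (2 * x))⁻¹ := by rw [← exp_nat_mul, ← exp_neg]; ring_nf
      _ ≤ (1 + 2 * x)⁻¹ := inv_anti₀ hpos (by linarith [add_one_le_exp (2 * x)])
      _ ≤ 1 - x := by rw [inv_le_iff_one_le_mul₀ hpos]; nlinarith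
  calc (√(1 - x))⁻¹ ≤ (exp (-x))⁻¹ :=
        inv_anti₀ (exp_pos _) (le_sqrt_of_sq_le hexp)
    _ = exp x := by rw [exp_neg, inv_inv]

section

variable {Ω ι : Type*} {mΩ : MeasurableSpace Ω} {P : Measure Ω}

lemma ProbabilityTheory.iIndepFun.curry {κ : ι → Type*}
    {𝓧 : (i : ι) → κ i → Type*} {m𝓧 : ∀ i j, MeasurableSpace (𝓧 i j)}
    {X : (i : ι) → (j : κ i) → Ω → 𝓧 i j} (mX : ∀ i j, Measurable (X i j))
    (h : iIndepFun (fun (p : (i : ι) × κ i) ω ↦ X p.1 p.2 ω) P) :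
    iIndepFun (fun i ω ↦ (X i · ω)) P := by
  have := h.isProbabilityMeasure
  have hblock : ∀ i, P.map (fun ω ↦ (X i · ω)) = Measure.infinitePi fun j ↦ P.map (X i j) :=
    fun i ↦ (h.precomp sigma_mk_injective).map_fun_eq_infinitePi_map (mX i)
  rw [iIndepFun_iff_map_fun_eq_infinitePi_map (fun i ↦ measurable_pi_iff.2 (mX i))]
  have := fun i j ↦ Measure.isProbabilityMeasure_map (μ := P) (mX i j).aemeasurable
  simp_rw [hblock]
  -- the law of the blocks is the image of the flat product law under `piCurry`
  rw [← Measure.infinitePi_map_piCurry, ← h.map_fun_eq_infinitePi_map (fun p ↦ mX p.1 p.2),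
    Measure.map_map (by fun_prop) (by fun_prop)]
  rfl

lemma ProbabilityTheory.iIndepFun.mul_of_sumElim {β : Type*}
    [MeasurableSpace β] [Mul β] [MeasurableMul₂ β] {U V : ι → Ω → β}
    (hU : ∀ i, Measurable (U i)) (hV : ∀ i, Measurable (V i)) (h : iIndepFun (Sum.elim U V) P) :
    iIndepFun (fun i ↦ U i * V i) P := by
  -- regroup `ι ⊕ ι` into the blocks `{inl i, inr i}`
  let pair : (_ : ι) × Bool → ι ⊕ ι := fun p ↦ bif p.2 then .inl p.1 else .inr p.1
  have hpair : pair.Injective := by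
    rintro ⟨i, _ | _⟩ ⟨j, _ | _⟩ <;> simp [pair]
  have hblocks := (h.precomp hpair).curry (X := fun i b ↦ Sum.elim U V (pair ⟨i, b⟩))
    (fun i b ↦ by cases b <;> simp [pair, hU, hV])
  exact hblocks.comp (fun _ v ↦ v true * v false) fun _ ↦ by fun_prop

lemma mgf_mul_of_indepFun_gaussianReal [IsProbabilityMeasure P] {U V : Ω → ℝ} {u v : ℝ≥0}
    (hu : u ≠ 0) (hU : Measurable U) (hV : Measurable V) (hUV : IndepFun U V P)
    (hlawU : P.map U = gaussianReal 0 u) (hlawV : P.map V = gaussianReal 0 v) {t : ℝ}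
    (ht : u * v * t ^ 2 < 1) :
    mgf (U * V) P t = (√(1 - u * v * t ^ 2))⁻¹ := by
  have hlaw : P.map (fun ω ↦ (U ω, V ω)) = (gaussianReal 0 u).prod (gaussianReal 0 v) := by
    rw [(indepFun_iff_map_prod_eq_prod_map_map hU.aemeasurable hV.aemeasurable).1 hUV,
      hlawU, hlawV]
  have hf : Continuous fun p : ℝ × ℝ ↦ exp (t * (p.1 * p.2)) := by fun_prop
  have hsection : ∀ x, ∫ y, exp (t * (x * y)) ∂gaussianReal 0 v = exp (v * t ^ 2 * x ^ 2 / 2) :=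
    fun x ↦ by
      have := congrFun (mgf_fun_id_gaussianReal (μ := 0) (v := v)) (t * x)
      simp only [mgf, zero_mul, zero_add] at this
      simp_rw [← mul_assoc]
      rw [this]
      ring_nf
  have hc : v * t ^ 2 * u < 1 := by linarith
  have hint : Integrable (fun p : ℝ × ℝ ↦ exp (t * (p.1 * p.2)))
      ((gaussianReal 0 u).prod (gaussianReal 0 v)) := by
    refine (integrable_prod_iff hf.aestronglyMeasurable).2 ⟨ae_of_all _ fun x ↦ ?_, ?_⟩
    · simpa only [mul_assoc] using integrable_exp_mul_gaussianReal (μ := 0) (v := v) (t * x)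
    · simpa only [norm_eq_abs, abs_exp, hsection] using integrable_exp_mul_sq_gaussianReal hu hc
  calc mgf (U * V) P t = ∫ p, exp (t * (p.1 * p.2)) ∂P.map (fun ω ↦ (U ω, V ω)) :=
        (integral_map (hU.prodMk hV).aemeasurable hf.aestronglyMeasurable).symm
    _ = ∫ x, exp (v * t ^ 2 * x ^ 2 / 2) ∂gaussianReal 0 u := by
        rw [hlaw, integral_prod _ hint]
        simp_rw [hsection]
    _ = (√(1 - u * v * t ^ 2))⁻¹ := by
        rw [integral_exp_mul_sq_gaussianReal hu hc]
        ring_nf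

lemma measure_abs_ge_le_exp_mul_mgf_add [IsFiniteMeasure P] {S : Ω → ℝ} {t : ℝ} (ε : ℝ)
    (ht : 0 ≤ t) (hint : Integrable (fun ω ↦ exp (t * S ω)) P)
    (hint_neg : Integrable (fun ω ↦ exp (-t * S ω)) P) :
    P.real {ω | ε ≤ |S ω|} ≤ exp (-t * ε) * (mgf S P t + mgf S P (-t)) := by
  have hsplit : {ω | ε ≤ |S ω|} ⊆ {ω | ε ≤ S ω} ∪ {ω | S ω ≤ -ε} :=
    fun ω (hω : ε ≤ |S ω|) ↦ (le_abs'.1 hω).symm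
  calc P.real {ω | ε ≤ |S ω|} ≤ P.real {ω | ε ≤ S ω} + P.real {ω | S ω ≤ -ε} :=
        (measureReal_mono hsplit).trans (measureReal_union_le _ _)
    _ ≤ exp (-t * ε) * mgf S P t + exp (-(-t) * -ε) * mgf S P (-t) :=
        add_le_add (measure_ge_le_exp_mul_mgf ε ht hint)
          (measure_le_le_exp_mul_mgf (-ε) (neg_nonpos.2 ht) hint_neg)
    _ = exp (-t * ε) * (mgf S P t + mgf S P (-t)) := by ring_nf

lemma mgf_sum_mul_of_gaussianReal [IsProbabilityMeasure P] (s : Finset ι)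
    {U V : ι → Ω → ℝ} {u v : ℝ≥0} (hu : u ≠ 0) (hU : ∀ i, Measurable (U i))
    (hV : ∀ i, Measurable (V i)) (hUV : iIndepFun (Sum.elim U V) P)
    (hlawU : ∀ i, P.map (U i) = gaussianReal 0 u) (hlawV : ∀ i, P.map (V i) = gaussianReal 0 v)
    {t : ℝ} (ht : u * v * t ^ 2 < 1) :
    mgf (∑ i ∈ s, U i * V i) P t = (√(1 - u * v * t ^ 2))⁻¹ ^ s.card := by
  rw [(hUV.mul_of_sumElim hU hV).mgf_sum (fun i ↦ (hU i).mul (hV i))]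
  exact Finset.prod_eq_pow_card fun i _ ↦ mgf_mul_of_indepFun_gaussianReal hu (hU i) (hV i)
    (hUV.indepFun Sum.inl_ne_inr) (hlawU i) (hlawV i) ht

lemma measure_abs_sum_mul_ge_le [IsProbabilityMeasure P] [Fintype ι]
    {U V : ι → Ω → ℝ} {u v : ℝ≥0} (hu : u ≠ 0) (hU : ∀ i, Measurable (U i))
    (hV : ∀ i, Measurable (V i)) (hUV : iIndepFun (Sum.elim U V) P)
    (hlawU : ∀ i, P.map (U i) = gaussianReal 0 u) (hlawV : ∀ i, P.map (V i) = gaussianReal 0 v)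
    {t : ℝ} (ht₀ : 0 ≤ t) (ht : u * v * t ^ 2 ≤ 1 / 2) (ε : ℝ) :
    P.real {ω | ε ≤ |∑ i, U i ω * V i ω|}
      ≤ 2 * exp (-t * ε + Fintype.card ι * (u * v * t ^ 2)) := by
  set S := ∑ i, U i * V i
  have hmgf : ∀ r, r ^ 2 = t ^ 2 → mgf S P r = (√(1 - u * v * t ^ 2))⁻¹ ^ Fintype.card ι :=
    fun r hr ↦ by
      rw [mgf_sum_mul_of_gaussianReal _ hu hU hV hUV hlawU hlawV (by rw [hr]; linarith), hr,
        Finset.card_univ]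
  have hint : ∀ r, r ^ 2 = t ^ 2 → Integrable (fun ω ↦ exp (r * S ω)) P :=
    fun r hr ↦ mgf_pos_iff.1 <| by
      rw [hmgf r hr]
      exact pow_pos (inv_pos.2 (sqrt_pos.2 (by linarith))) _
  have hmgf_le : (√(1 - u * v * t ^ 2))⁻¹ ^ Fintype.card ι
      ≤ exp (Fintype.card ι * (u * v * t ^ 2)) := by
    rw [exp_nat_mul]
    exact pow_le_pow_left₀ (by positivity) (inv_sqrt_one_sub_le_exp (by positivity) ht) _
  have hS : {ω | ε ≤ |∑ i, U i ω * V i ω|} = {ω | ε ≤ |S ω|} := by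
    simp only [S, Finset.sum_apply, Pi.mul_apply]
  calc P.real {ω | ε ≤ |∑ i, U i ω * V i ω|}
      ≤ exp (-t * ε) * (mgf S P t + mgf S P (-t)) :=
        hS ▸ measure_abs_ge_le_exp_mul_mgf_add ε ht₀ (hint t rfl) (hint (-t) (neg_sq t))
    _ ≤ exp (-t * ε) * (2 * exp (Fintype.card ι * (u * v * t ^ 2))) := by
        rw [hmgf t rfl, hmgf (-t) (neg_sq t)]
        gcongr
        linarith
    _ = 2 * exp (-t * ε + Fintype.card ι * (u * v * t ^ 2)) := by
        rw [exp_add]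
        ring

lemma measure_abs_sum_mul_ge_le_two_div_sq [IsProbabilityMeasure P] [Fintype ι] [Nonempty ι]
    {U V : ι → Ω → ℝ} (hU : ∀ i, Measurable (U i)) (hV : ∀ i, Measurable (V i))
    (hUV : iIndepFun (Sum.elim U V) P) (hlawU : ∀ i, P.map (U i) = gaussianReal 0 1)
    (hlawV : ∀ i, P.map (V i) = gaussianReal 0 1)
    (hlog : 8 * log (Fintype.card ι) ≤ Fintype.card ι) :
    P.real {ω | √(Fintype.card ι * (8 * log (Fintype.card ι))) ≤ |∑ i, U i ω * V i ω|}
      ≤ 2 / (Fintype.card ι : ℝ) ^ 2 := by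
  set n : ℝ := (Fintype.card ι : ℝ)
  have hn : 0 < n := by positivity
  -- this `t` makes the Chernoff exponent `-t ε + n t² = -4 log n + 2 log n`
  set t := √(2 * log n / n)
  have ht_sq : t ^ 2 = 2 * log n / n := sq_sqrt (by positivity)
  have ht_mul : t * √(n * (8 * log n)) = 4 * log n := by
    rw [← sqrt_mul (by positivity), show 2 * log n / n * (n * (8 * log n)) = (4 * log n) ^ 2 by
      field_simp; ring]
    exact sqrt_sq (by positivity)
  have ht : ((1 : ℝ≥0) : ℝ) * ((1 : ℝ≥0) : ℝ) * t ^ 2 ≤ 1 / 2 := by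
    rw [ht_sq, NNReal.coe_one, one_mul, one_mul, div_le_iff₀ hn]
    linarith
  refine (measure_abs_sum_mul_ge_le one_ne_zero hU hV hUV hlawU hlawV (sqrt_nonneg _) ht
    _).trans_eq ?_
  rw [NNReal.coe_one, one_mul, one_mul, ht_sq, neg_mul, ht_mul, mul_div_cancel₀ _ hn.ne',
    show -(4 * log n) + 2 * log n = -log (n ^ 2) by rw [log_pow]; push_cast; ring, exp_neg,
    exp_log (by positivity), div_eq_mul_inv]

lemma exists_sqrt_mul_le_abs_of_sqrt_lt {d : ℕ} {m a : ℝ} (hm : 0 < m) (ha : 0 ≤ a)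
    (s : Fin d → ℝ) (h : √(∑ j, ((1 / √(d * m)) * s j) ^ 2) > √a) :
    ∃ j, √(m * a) ≤ |s j| := by
  by_contra! hs
  have hsum : ∑ j, ((1 / √(d * m)) * s j) ^ 2 ≤ a :=
    calc ∑ j, ((1 / √(d * m)) * s j) ^ 2 = ∑ j, s j ^ 2 / (d * m) := by
          simp_rw [mul_pow, div_pow, one_pow, sq_sqrt (by positivity : (0 : ℝ) ≤ d * m)]
          ring_nf
      _ ≤ ∑ _j : Fin d, m * a / (d * m) := by
          gcongr with j
          calc s j ^ 2 = |s j| ^ 2 := (sq_abs _).symm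
            _ ≤ √(m * a) ^ 2 := by gcongr; exact (hs j).le
            _ = m * a := sq_sqrt (by positivity)
      _ ≤ a := by
          rw [Finset.sum_const, Finset.card_univ, Fintype.card_fin, nsmul_eq_mul, ← mul_div_assoc]
          exact div_le_of_le_mul₀ (by positivity) ha (le_of_eq (by ring))
  exact absurd h (not_lt.2 (sqrt_le_sqrt hsum))

end

theorem stmt_5_general {Ω : Type*} [MeasurableSpace Ω] (μ : Measure Ω) [IsProbabilityMeasure μ]
    (m d : ℕ) (hm : 2 ≤ m) (hlog : 8 * Real.log m ≤ m)
    (X : Fin m → Fin d → Ω → ℝ) (Y : Fin m → Ω → ℝ)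
    (hX : ∀ i j, Measurable (X i j)) (hY : ∀ i, Measurable (Y i))
    (hindep : iIndepFun (m := fun _ : (Fin m × Fin d) ⊕ Fin m => (inferInstance : MeasurableSpace ℝ))
      (Sum.elim (fun p => X p.1 p.2) Y) μ)
    (hlawX : ∀ i j, Measure.map (X i j) μ = gaussianReal 0 1)
    (hlawY : ∀ i, Measure.map (Y i) μ = gaussianReal 0 1) :
    μ {ω | Real.sqrt (∑ j : Fin d,
          ((1 / Real.sqrt (d * m)) * ∑ i : Fin m, X i j ω * Y i ω) ^ 2)
        > Real.sqrt (8 * Real.log m)}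
      ≤ ENNReal.ofReal (2 * d / m) := by
  have : NeZero m := ⟨by omega⟩
  have hm₁ : (1 : ℝ) ≤ m := by exact_mod_cast (by omega : 1 ≤ m)
  have hm₀ : (0 : ℝ) < m := by linarith
  set E : Fin d → Set Ω := fun j ↦ {ω | √(m * (8 * log m)) ≤ |∑ i, X i j ω * Y i ω|}
  have hE : ∀ j, μ.real (E j) ≤ 2 / (m : ℝ) ^ 2 := fun j ↦ by
    have hcol : iIndepFun (Sum.elim (X · j) Y) μ := by
      convert hindep.precomp (g := Sum.map (·, j) id)
        (Sum.map_injective.2 ⟨fun _ _ h ↦ (Prod.ext_iff.1 h).1, Function.injective_id⟩) using 1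
      ext (_ | _) <;> rfl
    simpa only [Fintype.card_fin] using measure_abs_sum_mul_ge_le_two_div_sq
      (fun i ↦ hX i j) hY hcol (fun i ↦ hlawX i j) hlawY (by simpa only [Fintype.card_fin])
  have hsub : {ω | √(∑ j : Fin d, ((1 / √(d * m)) * ∑ i : Fin m, X i j ω * Y i ω) ^ 2)
      > √(8 * log m)} ⊆ ⋃ j, E j := fun ω hω ↦
    Set.mem_iUnion.2 (exists_sqrt_mul_le_abs_of_sqrt_lt hm₀ (by positivity) _ hω)
  calc μ _ ≤ μ (⋃ j, E j) := measure_mono hsub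
    _ = ENNReal.ofReal (μ.real (⋃ j, E j)) := (ofReal_measureReal).symm
    _ ≤ ENNReal.ofReal (∑ _j : Fin d, 2 / (m : ℝ) ^ 2) := ENNReal.ofReal_le_ofReal <|
        (measureReal_iUnion_fintype_le _).trans (Finset.sum_le_sum fun j _ ↦ hE j)
    _ ≤ ENNReal.ofReal (2 * d / m) := ENNReal.ofReal_le_ofReal <| by
        rw [Finset.sum_const, Finset.card_univ, Fintype.card_fin, nsmul_eq_mul, mul_div_assoc',
          mul_comm]
        exact div_le_div_of_nonneg_left (by positivity) hm₀ (le_self_pow₀ hm₁ two_ne_zero)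

/-- NTK initialization: with `X_{ij}`, `Y_i` (`i ∈ [m]`, `j ∈ [d]`) mutually independent standard
Gaussians, `m ≥ 2`, `8·log m ≤ m`, the vector `θ ∈ ℝ^d` with
`θ_j = (1/√(d·m))·Σ_i X_{ij}·Y_i` satisfies `P[‖θ‖ > √(8·log m)] ≤ 2d/m`. -/
theorem stmt_5 {Ω : Type*} [MeasurableSpace Ω] (μ : Measure Ω) [IsProbabilityMeasure μ]
    (m d : ℕ) (hm : 2 ≤ m) (hd : 1 ≤ d) (hlog : 8 * Real.log m ≤ m)
    (X : Fin m → Fin d → Ω → ℝ) (Y : Fin m → Ω → ℝ)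
    (hX : ∀ i j, Measurable (X i j)) (hY : ∀ i, Measurable (Y i))
    (hindep : iIndepFun (m := fun _ : (Fin m × Fin d) ⊕ Fin m => (inferInstance : MeasurableSpace ℝ))
      (Sum.elim (fun p => X p.1 p.2) Y) μ)
    (hlawX : ∀ i j, Measure.map (X i j) μ = gaussianReal 0 1)
    (hlawY : ∀ i, Measure.map (Y i) μ = gaussianReal 0 1) :
    μ {ω | Real.sqrt (∑ j : Fin d,
          ((1 / Real.sqrt (d * m)) * ∑ i : Fin m, X i j ω * Y i ω) ^ 2)
        > Real.sqrt (8 * Real.log m)}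
      ≤ ENNReal.ofReal (2 * d / m) :=
  stmt_5_general μ m d hm hlog X Y hX hY hindep hlawX hlawY
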